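/- arXiv:2203.01016 — 4 statements merged into one kernel-verified Lean document; each statement's English description precedes it below -/
import Mathlib

section
/- For all real numbers x₁, x₂, x₃ that are not all equal, max(x₁, x₂, x₃) = (1/2)·(x₁(|x₁-x₂| + |x₁-x₃|) + x₂(|x₁-x₂| + |x₂-x₃|) + x₃(|x₂-x₃| + |x₁-x₃|)) / (|x₁-x₂| + |x₂-x₃| + |x₁-x₃|) + (|x₁-x₂| + |x₂-x₃| + |x₁-x₃|)/4. -/
theorem stmt3 (x₁ x₂ x₃ : ℝ) (h : ¬ (x₁ = x₂ ∧ x₂ = x₃)) :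
    max x₁ (max x₂ x₃) =
      (1 / 2) * (x₁ * (|x₁ - x₂| + |x₁ - x₃|) + x₂ * (|x₁ - x₂| + |x₂ - x₃|)
          + x₃ * (|x₂ - x₃| + |x₁ - x₃|)) / (|x₁ - x₂| + |x₂ - x₃| + |x₁ - x₃|)
        + (|x₁ - x₂| + |x₂ - x₃| + |x₁ - x₃|) / 4 := by
  have hD : 0 < |x₁ - x₂| + |x₂ - x₃| + |x₁ - x₃| := by
    rcases (abs_nonneg (x₁ - x₂)).lt_or_eq with h1 | h1
    · positivity
    rcases (abs_nonneg (x₂ - x₃)).lt_or_eq with h2 | h2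
    · positivity
    exact absurd ⟨by have := abs_eq_zero.mp h1.symm; linarith,
                  by have := abs_eq_zero.mp h2.symm; linarith⟩ h
  rcases le_total x₁ x₂ with h12 | h12 <;> rcases le_total x₂ x₃ with h23 | h23 <;>
    rcases le_total x₁ x₃ with h13 | h13
  · rw [abs_of_nonpos (by linarith : x₁ - x₂ ≤ 0), abs_of_nonpos (by linarith : x₂ - x₃ ≤ 0),
      abs_of_nonpos (by linarith : x₁ - x₃ ≤ 0)] at hD ⊢
    rw [max_eq_right (le_max_of_le_right h13), max_eq_right h23]
    rw [div_add' _ _ _ (ne_of_gt hD), eq_div_iff (ne_of_gt hD)]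
    ring
  · exact absurd ⟨le_antisymm h12 (by linarith), le_antisymm h23 (by linarith)⟩ h
  · rw [abs_of_nonpos (by linarith : x₁ - x₂ ≤ 0), abs_of_nonneg (by linarith : 0 ≤ x₂ - x₃),
      abs_of_nonpos (by linarith : x₁ - x₃ ≤ 0)] at hD ⊢
    rw [max_eq_right (le_max_of_le_left h12), max_eq_left h23]
    rw [div_add' _ _ _ (ne_of_gt hD), eq_div_iff (ne_of_gt hD)]
    ring
  · rw [abs_of_nonpos (by linarith : x₁ - x₂ ≤ 0), abs_of_nonneg (by linarith : 0 ≤ x₂ - x₃),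
      abs_of_nonneg (by linarith : 0 ≤ x₁ - x₃)] at hD ⊢
    rw [max_eq_right (le_max_of_le_left h12), max_eq_left h23]
    rw [div_add' _ _ _ (ne_of_gt hD), eq_div_iff (ne_of_gt hD)]
    ring
  · rw [abs_of_nonneg (by linarith : 0 ≤ x₁ - x₂), abs_of_nonpos (by linarith : x₂ - x₃ ≤ 0),
      abs_of_nonpos (by linarith : x₁ - x₃ ≤ 0)] at hD ⊢
    rw [max_eq_right (le_max_of_le_right h13), max_eq_right h23]
    rw [div_add' _ _ _ (ne_of_gt hD), eq_div_iff (ne_of_gt hD)]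
    ring
  · rw [abs_of_nonneg (by linarith : 0 ≤ x₁ - x₂), abs_of_nonpos (by linarith : x₂ - x₃ ≤ 0),
      abs_of_nonneg (by linarith : 0 ≤ x₁ - x₃)] at hD ⊢
    rw [max_eq_left (max_le (by linarith) h13)]
    rw [div_add' _ _ _ (ne_of_gt hD), eq_div_iff (ne_of_gt hD)]
    ring
  · exact absurd ⟨le_antisymm (by linarith) h12, le_antisymm (by linarith) h23⟩ h
  · rw [abs_of_nonneg (by linarith : 0 ≤ x₁ - x₂), abs_of_nonneg (by linarith : 0 ≤ x₂ - x₃),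
      abs_of_nonneg (by linarith : 0 ≤ x₁ - x₃)] at hD ⊢
    rw [max_eq_left (max_le h12 h13)]
    rw [div_add' _ _ _ (ne_of_gt hD), eq_div_iff (ne_of_gt hD)]
    ring
end

section
/- Let d ≥ 2 and define S(x) = (1/d) · Σ_{k=1}^d max{x_j : j ≠ k} for x ∈ [0,1]^d. Then the infimum over β ∈ ℝ of sup_{x ∈ [0,1]^d} |max_i x_i − β·S(x)| equals 1/(2d−1), attained at β = 2d/(2d−1). -/
/-!
Write `M` for the maximum and `T = d • S` for the sum of the leave-one-out maxima. Each
leave-one-out maximum is at most `M`, and all but the one omitting an argmax equal `M`, so on the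
cube `(d - 1) M ≤ T ≤ d M` and `0 ≤ M ≤ 1`. On this region `|(2d - 1) M - 2T| ≤ M ≤ 1`, which is
the upper bound at `β = 2d / (2d - 1)`. Conversely the points `(1, …, 1)` and `e₁` have errors
`|1 - β|` and `|1 - β (d - 1) / d|`; as `d (1 - β (d - 1) / d) - (d - 1) (1 - β) = 1`, one of
them is at least `1 / (2d - 1)`.
-/

namespace Finset

variable {ι : Type*} [DecidableEq ι]

theorem sup'_pi_single {s : Finset ι} (hs : s.Nonempty) (i : ι) {a : ℝ} (ha : 0 ≤ a) :
    s.sup' hs (Pi.single i a) = if i ∈ s then a else 0 := by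
  refine le_antisymm (sup'_le _ _ fun j _ => ?_) ?_
  · rcases eq_or_ne j i with rfl | hji
    · split_ifs; simp_all
    · split_ifs <;> simp [hji, ha]
  · split_ifs with his
    · exact le_sup'_of_le _ his (by simp)
    · obtain ⟨j, hj⟩ := hs
      have hji : j ≠ i := by rintro rfl; exact his hj
      exact le_sup'_of_le _ hj (by simp [hji])

variable [Fintype ι]

theorem sum_sup'_erase_le_card_mul_sup' (hne : (univ : Finset ι).Nonempty)
    (h : ∀ k, (univ.erase k).Nonempty) (x : ι → ℝ) :
    ∑ k, (univ.erase k).sup' (h k) x ≤ Fintype.card ι * univ.sup' hne x := by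
  calc ∑ k, (univ.erase k).sup' (h k) x ≤ ∑ _k : ι, univ.sup' hne x :=
        sum_le_sum fun k _ => sup'_mono x (erase_subset k univ) (h k)
    _ = Fintype.card ι * univ.sup' hne x := by simp

theorem card_sub_one_mul_sup'_le_sum_sup'_erase (hne : (univ : Finset ι).Nonempty)
    (h : ∀ k, (univ.erase k).Nonempty) {x : ι → ℝ} (hx : 0 ≤ x) :
    (Fintype.card ι - 1) * univ.sup' hne x ≤ ∑ k, (univ.erase k).sup' (h k) x := by
  obtain ⟨i, -, hi⟩ := exists_mem_eq_sup' hne x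
  set M := univ.sup' hne x
  have hterm : ∀ k, M - Pi.single (M := fun _ => ℝ) i M k ≤ (univ.erase k).sup' (h k) x := by
    intro k
    rcases eq_or_ne k i with rfl | hki
    · obtain ⟨j, hj⟩ := h k
      simpa using le_sup'_of_le x hj (hx j)
    · rw [Pi.single_eq_of_ne hki, sub_zero, hi]
      exact le_sup' x (mem_erase.mpr ⟨hki.symm, mem_univ i⟩)
  calc (Fintype.card ι - 1) * M = ∑ k, (M - Pi.single (M := fun _ => ℝ) i M k) := by
          simp [sum_sub_distrib, sub_mul]
    _ ≤ _ := sum_le_sum fun k _ => hterm k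

theorem sum_sup'_erase_pi_single_one (h : ∀ k, (univ.erase k).Nonempty) (i : ι) :
    ∑ k, (univ.erase k).sup' (h k) (Pi.single i (1 : ℝ)) = Fintype.card ι - 1 := by
  simp [sup'_pi_single _ i zero_le_one, eq_comm (a := i), sum_ite, filter_ne',
    Nat.cast_sub (Fintype.card_pos_iff.mpr ⟨i⟩)]

end Finset

section Region

variable {D m s : ℝ}

theorem abs_sub_mul_le_of_le_of_le (hD : 1 ≤ D) (hm : m ≤ 1)
    (hlo : (D - 1) * m ≤ D * s) (hhi : D * s ≤ D * m) :
    |m - 2 * D / (2 * D - 1) * s| ≤ 1 / (2 * D - 1) := by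
  have hpos : 0 < 2 * D - 1 := by linarith
  have hnum : |(2 * D - 1) * m - 2 * (D * s)| ≤ 1 := abs_le.mpr ⟨by linarith, by linarith⟩
  calc |m - 2 * D / (2 * D - 1) * s| = |(2 * D - 1) * m - 2 * (D * s)| / (2 * D - 1) := by
        rw [← abs_of_pos hpos, ← abs_div, abs_of_pos hpos]; congr 1; field_simp
    _ ≤ 1 / (2 * D - 1) := by gcongr

theorem abs_sub_mul_le_one_add_abs (hD : 1 ≤ D) (hm₀ : 0 ≤ m) (hm₁ : m ≤ 1)
    (hlo : (D - 1) * m ≤ D * s) (hhi : D * s ≤ D * m) (β : ℝ) :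
    |m - β * s| ≤ 1 + |β| := by
  have hs₀ : 0 ≤ s := by nlinarith
  have hs₁ : s ≤ 1 := by nlinarith
  calc |m - β * s| ≤ |m| + |β| * |s| := (abs_sub _ _).trans_eq (by rw [abs_mul])
    _ ≤ 1 + |β| * 1 := by
        rw [abs_of_nonneg hm₀, abs_of_nonneg hs₀]
        gcongr
    _ = 1 + |β| := by ring

theorem one_div_le_max_abs (hD : 1 ≤ D) (β : ℝ) :
    1 / (2 * D - 1) ≤ max |1 - β| |1 - β * ((D - 1) / D)| := by
  set u := 1 - β
  set v := 1 - β * ((D - 1) / D)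
  have hcomb : D * v - (D - 1) * u = 1 := by simp only [u, v]; field_simp; ring
  rw [div_le_iff₀' (by linarith)]
  calc 1 = |D * v - (D - 1) * u| := by rw [hcomb, abs_one]
    _ ≤ |D * v| + |(D - 1) * u| := abs_sub _ _
    _ = D * |v| + (D - 1) * |u| := by
        rw [abs_mul, abs_mul, abs_of_nonneg (by linarith : 0 ≤ D),
          abs_of_nonneg (by linarith : 0 ≤ D - 1)]
    _ ≤ D * max |u| |v| + (D - 1) * max |u| |v| := by
        gcongr
        exacts [le_max_right _ _, le_max_left _ _]
    _ = (2 * D - 1) * max |u| |v| := by ring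

end Region

section Minimax

variable {X : Type*} {D : ℝ} {m s : X → ℝ}

theorem one_div_le_iSup_abs_sub_mul (hD : 1 ≤ D)
    (hreg : ∀ x, 0 ≤ m x ∧ m x ≤ 1 ∧ (D - 1) * m x ≤ D * s x ∧ D * s x ≤ D * m x)
    {x₁ x₂ : X} (hm₁ : m x₁ = 1) (hs₁ : s x₁ = 1) (hm₂ : m x₂ = 1) (hs₂ : s x₂ = (D - 1) / D)
    (β : ℝ) : 1 / (2 * D - 1) ≤ ⨆ x, |m x - β * s x| := by
  have hbdd : BddAbove (Set.range fun x => |m x - β * s x|) :=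
    ⟨1 + |β|, Set.forall_mem_range.mpr fun x =>
      abs_sub_mul_le_one_add_abs hD (hreg x).1 (hreg x).2.1 (hreg x).2.2.1 (hreg x).2.2.2 β⟩
  rcases le_max_iff.mp (one_div_le_max_abs hD β) with h | h
  · exact le_ciSup_of_le hbdd x₁ (by rwa [hm₁, hs₁, mul_one])
  · exact le_ciSup_of_le hbdd x₂ (by rwa [hm₂, hs₂])

theorem iSup_abs_sub_mul_le [Nonempty X] (hD : 1 ≤ D)
    (hreg : ∀ x, m x ≤ 1 ∧ (D - 1) * m x ≤ D * s x ∧ D * s x ≤ D * m x) :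
    ⨆ x, |m x - 2 * D / (2 * D - 1) * s x| ≤ 1 / (2 * D - 1) :=
  ciSup_le fun x => abs_sub_mul_le_of_le_of_le hD (hreg x).1 (hreg x).2.1 (hreg x).2.2

end Minimax

theorem stmt6 (d : ℕ) (hd : 2 ≤ d)
    (S : (Fin d → ℝ) → ℝ)
    (hS : ∀ x, S x = (1 / (d : ℝ)) *
        ∑ k : Fin d, (Finset.univ.erase k).sup' (Finset.card_pos.mp (by
            rw [Finset.card_erase_of_mem (Finset.mem_univ k), Finset.card_univ,
              Fintype.card_fin]; omega)) x)
    (E : ℝ → ℝ)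
    (hE : ∀ β, E β = ⨆ x : {x : Fin d → ℝ // ∀ i, x i ∈ Set.Icc (0 : ℝ) 1},
        |Finset.univ.sup' (Finset.univ_nonempty_iff.mpr
            (Fin.pos_iff_nonempty.mp (by omega))) x.1 - β * S x.1|) :
    (∀ β : ℝ, 1 / (2 * d - 1) ≤ E β) ∧ E (2 * d / (2 * d - 1)) = 1 / (2 * d - 1) := by
  have hd₁ : (1 : ℝ) ≤ d := by exact_mod_cast (by omega : 1 ≤ d)
  have hne : (Finset.univ : Finset (Fin d)).Nonempty := Finset.univ_nonempty_iff.mpr ⟨⟨0, by omega⟩⟩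
  have herase (k : Fin d) : (Finset.univ.erase k).Nonempty := by
    rw [← Finset.card_pos, Finset.card_erase_of_mem (Finset.mem_univ k), Finset.card_univ,
      Fintype.card_fin]; omega
  have hdS (x) : d * S x = ∑ k, (Finset.univ.erase k).sup' (herase k) x := by
    rw [hS]; field_simp
  set M : (Fin d → ℝ) → ℝ := fun x => Finset.univ.sup' hne x
  have hreg (x : {x : Fin d → ℝ // ∀ i, x i ∈ Set.Icc (0 : ℝ) 1}) :
      0 ≤ M x ∧ M x ≤ 1 ∧ (d - 1) * M x ≤ d * S x ∧ d * S x ≤ d * M x := by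
    have hx₀ : 0 ≤ x.1 := fun i => (x.2 i).1
    refine ⟨Finset.le_sup'_of_le _ (Finset.mem_univ ⟨0, by omega⟩) (hx₀ _),
      Finset.sup'_le _ _ fun i _ => (x.2 i).2, ?_, ?_⟩
    · simpa [hdS] using Finset.card_sub_one_mul_sup'_le_sum_sup'_erase hne herase hx₀
    · simpa [hdS] using Finset.sum_sup'_erase_le_card_mul_sup' hne herase x.1
  have hS₁ : S (fun _ => 1) = 1 := by
    refine mul_left_cancel₀ (by positivity : (d : ℝ) ≠ 0) ?_
    simp [hdS]
  set i₀ : Fin d := ⟨0, by omega⟩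
  have hS₂ : S (Pi.single i₀ 1) = (d - 1) / d := by
    rw [eq_div_iff (by positivity), mul_comm, hdS, Finset.sum_sup'_erase_pi_single_one,
      Fintype.card_fin]
  have hlower := one_div_le_iSup_abs_sub_mul hd₁ hreg
    (x₁ := ⟨fun _ => 1, fun _ => ⟨zero_le_one, le_rfl⟩⟩) (Finset.sup'_const _ _) hS₁
    (x₂ := ⟨Pi.single i₀ 1, fun i => by rcases eq_or_ne i i₀ with rfl | hi <;> simp [*]⟩)
    (by simp [M, Finset.sup'_pi_single]) hS₂
  have : Nonempty {x : Fin d → ℝ // ∀ i, x i ∈ Set.Icc (0 : ℝ) 1} :=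
    ⟨⟨0, fun _ => ⟨le_rfl, zero_le_one⟩⟩⟩
  simp only [hE]
  exact ⟨hlower, le_antisymm (iSup_abs_sub_mul_le hd₁ fun x => (hreg x).2) (hlower _)⟩
end

section
/- Let d ≥ 1. Define S(x; r, d) = (1/C(d,r)) Σ_{|R|=r} max{x_j : j ∈ R} on [0,1]^d for fixed r with 1 ≤ r ≤ d. Then in any decomposition S(·; r, d) = Σ_{k=1}^K f_k where each f_k : [0,1]^d → ℝ depends on at most r coordinates, one must have K ≥ C(d, r). -/
/-!
Test each `r`-set `R` of coordinates with the mixed difference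
`Δ_R g = ∑_{T ⊆ R} (-1)^|T| g(1_T)` over the corners of the face of `[0,1]^d` spanned by `R`.
It vanishes on every function that ignores some coordinate of `R`, so `Δ_R f_k ≠ 0` forces the
coordinate set of `f_k`, of size at most `r`, to be `R`. On the other hand, for `T ⊆ R` the
maximum over `B` of `1_T` is `1` unless `T ⊆ R \ B`, so inclusion–exclusion gives
`Δ_R (max_B) = -[R ⊆ B]`, and hence `Δ_R S = -1 / C(d, r) ≠ 0`.
Thus every `r`-set is the coordinate set of some `f_k`.
-/

/-- `f` depends on at most `r` coordinates. -/
def DependsOnAtMost {d : ℕ} (r : ℕ) (f : (Fin d → ℝ) → ℝ) : Prop :=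
  ∃ I : Finset (Fin d), I.card ≤ r ∧
    ∀ x y : Fin d → ℝ, (∀ i ∈ I, x i = y i) → f x = f y

open Finset

section MixedDiff

variable {ι : Type*}

noncomputable def mixedDiff (R : Finset ι) (g : (ι → ℝ) → ℝ) : ℝ :=
  ∑ T ∈ R.powerset, (-1 : ℝ) ^ #T * g ((T : Set ι).indicator 1)

lemma mixedDiff_congr {R : Finset ι} {g h : (ι → ℝ) → ℝ}
    (hgh : ∀ T ⊆ R, g ((T : Set ι).indicator 1) = h ((T : Set ι).indicator 1)) :
    mixedDiff R g = mixedDiff R h :=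
  sum_congr rfl fun T hT => by rw [hgh T (mem_powerset.mp hT)]

lemma mixedDiff_sum {κ : Type*} (s : Finset κ) (R : Finset ι) (f : κ → (ι → ℝ) → ℝ) :
    mixedDiff R (fun x => ∑ k ∈ s, f k x) = ∑ k ∈ s, mixedDiff R (f k) := by
  simp only [mixedDiff, mul_sum]
  exact sum_comm

lemma mixedDiff_const_mul (c : ℝ) (R : Finset ι) (g : (ι → ℝ) → ℝ) :
    mixedDiff R (fun x => c * g x) = c * mixedDiff R g := by
  simp only [mixedDiff, mul_sum, mul_left_comm c]

variable [DecidableEq ι]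

lemma mixedDiff_eq_zero_of_not_subset {R I : Finset ι} {g : (ι → ℝ) → ℝ}
    (hg : ∀ x y : ι → ℝ, (∀ i ∈ I, x i = y i) → g x = g y) (hRI : ¬ R ⊆ I) :
    mixedDiff R g = 0 := by
  obtain ⟨i, hiR, hiI⟩ := not_subset.mp hRI
  rw [mixedDiff, ← insert_erase hiR, sum_powerset_insert (notMem_erase i R),
    ← sum_add_distrib]
  refine sum_eq_zero fun T hT => ?_
  have hiT : i ∉ T := fun h => notMem_erase i R (mem_powerset.mp hT h)
  have hgi : g (((insert i T : Finset ι) : Set ι).indicator 1) = g ((T : Set ι).indicator 1) :=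
    hg _ _ fun j hj => by simp [Set.indicator, ne_of_mem_of_not_mem hj hiI]
  rw [card_insert_of_notMem hiT, pow_succ, hgi]
  ring

lemma sup'_indicator_one {B : Finset ι} (hB : B.Nonempty) (T : Finset ι) :
    B.sup' hB ((T : Set ι).indicator (1 : ι → ℝ)) = if Disjoint B T then 0 else 1 := by
  split_ifs with h
  · exact (sup'_congr hB rfl fun i hi =>
      Set.indicator_of_notMem (disjoint_left.mp h hi) _).trans (sup'_const hB 0)
  · obtain ⟨j, hjB, hjT⟩ := not_disjoint_iff.mp h
    refine le_antisymm (sup'_le hB _ fun i _ => ?_) (le_sup'_of_le _ hjB (by simp [hjT]))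
    by_cases hi : i ∈ T <;> simp [hi]

lemma sum_powerset_neg_one_pow_card_real (s : Finset ι) :
    ∑ T ∈ s.powerset, (-1 : ℝ) ^ #T = if s = ∅ then 1 else 0 := by
  exact_mod_cast sum_powerset_neg_one_pow_card

lemma mixedDiff_sup' {R B : Finset ι} (hR : R.Nonempty) (hB : B.Nonempty) :
    mixedDiff R (B.sup' hB) = if R ⊆ B then -1 else 0 := by
  have hfilter : {T ∈ R.powerset | Disjoint B T} = (R \ B).powerset := by
    ext T
    simp [subset_sdiff, disjoint_comm]
  have hsplit : ∀ T : Finset ι, (if Disjoint B T then (0 : ℝ) else 1) =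
      1 - if Disjoint B T then 1 else 0 := fun T => by split_ifs <;> norm_num
  simp only [mixedDiff, sup'_indicator_one, hsplit, mul_sub, mul_one, mul_ite, mul_zero,
    sum_sub_distrib, ← sum_filter, hfilter, sum_powerset_neg_one_pow_card_real,
    sdiff_eq_empty_iff_subset, if_neg (nonempty_iff_ne_empty.mp hR)]
  split_ifs <;> norm_num

lemma mixedDiff_sum_sup' (s : Finset (Finset ι)) (hs : ∀ B ∈ s, B.Nonempty) {R : Finset ι}
    (hR : R.Nonempty) :
    mixedDiff R (fun x => ∑ B ∈ s.attach, B.1.sup' (hs B.1 B.2) x) = -#{B ∈ s | R ⊆ B} := by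
  simp only [mixedDiff_sum, mixedDiff_sup' hR]
  rw [sum_attach s fun B => if R ⊆ B then (-1 : ℝ) else 0]
  simp [sum_ite]

lemma exists_eq_of_mixedDiff_ne_zero {κ : Type*} [Fintype κ] {g : (ι → ℝ) → ℝ}
    {f : κ → (ι → ℝ) → ℝ} {I : κ → Finset ι} {R : Finset ι}
    (hI : ∀ k, #(I k) ≤ #R) (hf : ∀ k x y, (∀ i ∈ I k, x i = y i) → f k x = f k y)
    (hgf : ∀ T ⊆ R, g ((T : Set ι).indicator 1) = ∑ k, f k ((T : Set ι).indicator 1))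
    (hR : mixedDiff R g ≠ 0) : ∃ k, I k = R := by
  rw [mixedDiff_congr (h := fun x => ∑ k, f k x) hgf, mixedDiff_sum] at hR
  obtain ⟨k, -, hk⟩ := exists_ne_zero_of_sum_ne_zero hR
  have hRI : R ⊆ I k := by
    by_contra h
    exact hk (mixedDiff_eq_zero_of_not_subset (hf k) h)
  exact ⟨k, (eq_of_subset_of_card_le hRI (hI k)).symm⟩

end MixedDiff

lemma filter_superset_powersetCard {α : Type*} [DecidableEq α] {r : ℕ} {s R : Finset α}
    (hR : R ∈ powersetCard r s) : {B ∈ powersetCard r s | R ⊆ B} = {R} := by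
  ext B
  simp only [mem_filter, mem_powersetCard, mem_singleton]
  refine ⟨fun ⟨⟨_, hBr⟩, hRB⟩ => ?_,
    fun hBR => ⟨hBR ▸ mem_powersetCard.mp hR, hBR ▸ subset_rfl⟩⟩
  exact (eq_of_subset_of_card_le hRB (hBr.trans (mem_powersetCard.mp hR).2.symm).le).symm

theorem stmt14 (d r : ℕ) (hr : 1 ≤ r)
    (S : (Fin d → ℝ) → ℝ)
    (hS : ∀ x, S x = (1 / (d.choose r) : ℝ) *
        ∑ R ∈ (Finset.powersetCard r (Finset.univ : Finset (Fin d))).attach,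
          R.1.sup' (Finset.card_pos.mp (by
            rw [(Finset.mem_powersetCard.mp R.2).2]; exact hr)) x)
    (K : ℕ) (f : Fin K → (Fin d → ℝ) → ℝ)
    (hdep : ∀ k, DependsOnAtMost r (f k))
    (hdecomp : ∀ x : Fin d → ℝ, (∀ i, x i ∈ Set.Icc (0 : ℝ) 1) →
      S x = ∑ k, f k x) :
    d.choose r ≤ K := by
  choose I hIcard hIdep using hdep
  have hcover : powersetCard r univ ⊆ univ.image I := by
    intro R hR
    have hRr : #R = r := (mem_powersetCard.mp hR).2
    have hchoose : (d.choose r : ℝ) ≠ 0 := by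
      have hrd := card_le_univ R
      rw [Fintype.card_fin, hRr] at hrd
      exact_mod_cast (Nat.choose_pos hrd).ne'
    have hSR : mixedDiff R S = -(d.choose r : ℝ)⁻¹ := by
      rw [funext hS, mixedDiff_const_mul, mixedDiff_sum_sup' _
        (fun B hB => card_pos.mp ((mem_powersetCard.mp hB).2 ▸ hr)) (card_pos.mp (hRr ▸ hr)),
        filter_superset_powersetCard hR]
      simp
    have hcube (T : Finset (Fin d)) (i : Fin d) :
        (T : Set (Fin d)).indicator (1 : Fin d → ℝ) i ∈ Set.Icc 0 1 := by
      by_cases hi : i ∈ T <;> simp [hi]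
    obtain ⟨k, hk⟩ := exists_eq_of_mixedDiff_ne_zero (I := I) (fun k => hRr ▸ hIcard k) hIdep
      (fun T _ => hdecomp _ (hcube T)) (by simpa [hSR] using hchoose)
    exact mem_image.mpr ⟨k, mem_univ k, hk⟩
  simpa using (card_le_card hcover).trans card_image_le
end

section
/- For every d ≥ 1, the function MAX : ℝ^d → ℝ, x ↦ max_i x_i, can be written as a composition of at most ⌈log₂ d⌉ layers, each of the form (affine map) ∘ (coordinatewise ReLU) ∘ (affine map), using the identity max(a,b) = (ReLU(a−b) + ReLU(b−a) + a + b)/2 recursively on pairs. -/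
/-- A single ReLU network layer: `x ↦ A₂ · ReLU(A₁ x + b₁) + b₂`. -/
def IsReLULayer {n m : ℕ} (f : (Fin n → ℝ) → (Fin m → ℝ)) : Prop :=
  ∃ (p : ℕ) (A₁ : Matrix (Fin p) (Fin n) ℝ) (b₁ : Fin p → ℝ)
    (A₂ : Matrix (Fin m) (Fin p) ℝ) (b₂ : Fin m → ℝ),
    f = fun x => A₂.mulVec (fun i => max (A₁.mulVec x i + b₁ i) 0) + b₂

/-- `ReLUNet L n m f` : `f : ℝ^n → ℝ^m` is a composition of `L` ReLU layers. -/
inductive ReLUNet : ℕ → (n m : ℕ) → ((Fin n → ℝ) → (Fin m → ℝ)) → Prop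
  | id (n : ℕ) : ReLUNet 0 n n (fun x => x)
  | comp {L n p m : ℕ} {f : (Fin n → ℝ) → (Fin p → ℝ)}
      {g : (Fin p → ℝ) → (Fin m → ℝ)} :
      ReLUNet L n p f → IsReLULayer g → ReLUNet (L + 1) n m (g ∘ f)
/-!
Since `max a b = (ReLU(a - b) + ReLU(b - a) + ReLU(a + b) - ReLU(-a - b)) / 2`, a single layer
maps `x ∈ ℝ^d` to the `⌈d/2⌉` maxima of the pairs `(x₀, x₁), (x₂, x₃), …` (the last coordinate
paired with itself when `d` is odd), and these have the same maximum as `x`. Iterating, `⌈log₂ d⌉`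
halvings bring the dimension down to `1`.
-/

open Matrix

lemma max_eq_sum_relu (a b : ℝ) :
    max a b = ∑ r : Fin 4, ![1/2, 1/2, 1/2, -1/2] r *
      max (![1, -1, 1, -1] r * a + ![-1, 1, 1, -1] r * b) 0 := by
  simp only [Fin.sum_univ_four, cons_val_zero, cons_val_one, cons_val_two, cons_val_three,
    head_cons, tail_cons, one_mul, neg_one_mul, max_def]
  split_ifs <;> linarith

lemma isReLULayer_sum_relu {n m q : ℕ} (A : Fin m → Fin q → Fin n → ℝ) (w : Fin q → ℝ) :
    IsReLULayer fun x i => ∑ r, w r * max (A i r ⬝ᵥ x) 0 := by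
  let e : Fin m × Fin q ≃ Fin (m * q) := finProdFinEquiv
  refine ⟨m * q, .of fun k => A (e.symm k).1 (e.symm k).2, 0,
    .of fun i k => if (e.symm k).1 = i then w (e.symm k).2 else 0, 0, ?_⟩
  funext x i
  simp only [mulVec, dotProduct, of_apply, Pi.add_apply, Pi.zero_apply, add_zero]
  rw [← e.sum_comp, Fintype.sum_prod_type]
  simp [ite_mul]

def pairMax {n m : ℕ} (a b : Fin m → Fin n) (x : Fin n → ℝ) : Fin m → ℝ :=
  fun i => max (x (a i)) (x (b i))

lemma isReLULayer_pairMax {n m : ℕ} (a b : Fin m → Fin n) : IsReLULayer (pairMax a b) := by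
  convert isReLULayer_sum_relu
    (fun i r => Pi.single (a i) (![1, -1, 1, -1] r) + Pi.single (b i) (![-1, 1, 1, -1] r))
    ![1/2, 1/2, 1/2, -1/2] using 3 with x i
  simp only [pairMax, add_dotProduct, single_dotProduct]
  exact max_eq_sum_relu _ _

lemma sup'_pairMax {n m : ℕ} {a b : Fin m → Fin n} (hab : ∀ j, ∃ i, a i = j ∨ b i = j)
    (hm : (Finset.univ : Finset (Fin m)).Nonempty) (hn : (Finset.univ : Finset (Fin n)).Nonempty)
    (x : Fin n → ℝ) : Finset.univ.sup' hm (pairMax a b x) = Finset.univ.sup' hn x := by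
  refine le_antisymm (Finset.sup'_le _ _ fun i _ => ?_) (Finset.sup'_le _ _ fun j _ => ?_)
  · exact max_le (Finset.le_sup' x (Finset.mem_univ _)) (Finset.le_sup' x (Finset.mem_univ _))
  · obtain ⟨i, rfl | rfl⟩ := hab j
    · exact (le_max_left _ _).trans (Finset.le_sup' (pairMax a b x) (Finset.mem_univ i))
    · exact (le_max_right _ _).trans (Finset.le_sup' (pairMax a b x) (Finset.mem_univ i))

def pairLeft (d : ℕ) (i : Fin ((d + 1) / 2)) : Fin d := ⟨2 * i, by omega⟩

def pairRight (d : ℕ) (i : Fin ((d + 1) / 2)) : Fin d := ⟨min (2 * i + 1) (d - 1), by omega⟩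

lemma exists_pairLeft_or_pairRight (d : ℕ) (j : Fin d) :
    ∃ i, pairLeft d i = j ∨ pairRight d i = j :=
  ⟨⟨j / 2, by omega⟩, by simp only [pairLeft, pairRight, Fin.ext_iff]; omega⟩

lemma ReLUNet.precomp {L n p m : ℕ} {g : (Fin n → ℝ) → (Fin p → ℝ)}
    {f : (Fin p → ℝ) → (Fin m → ℝ)} (hg : IsReLULayer g) (hf : ReLUNet L p m f) :
    ReLUNet (L + 1) n m (f ∘ g) := by
  induction hf with
  | id => exact (ReLUNet.id n).comp hg
  | comp _ hg' ih => exact (ih hg).comp hg'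

theorem stmt19 (d : ℕ) (hd : 1 ≤ d) :
    ∃ (L : ℕ), L ≤ Nat.clog 2 d ∧
      ∃ f : (Fin d → ℝ) → (Fin 1 → ℝ), ReLUNet L d 1 f ∧
        ∀ x : Fin d → ℝ, f x 0 = Finset.univ.sup' (Finset.univ_nonempty_iff.mpr
            (Fin.pos_iff_nonempty.mp hd)) x := by
  induction d using Nat.strong_induction_on with
  | _ d ih =>
  obtain rfl | hd2 := hd.eq_or_lt
  · refine ⟨0, Nat.zero_le _, id, ReLUNet.id 1, fun x => ?_⟩
    simp [Finset.univ_unique]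
  · obtain ⟨L, hL, f, hf, hfx⟩ := ih ((d + 1) / 2) (by omega) (by omega)
    refine ⟨L + 1, by rw [Nat.clog_of_two_le one_lt_two hd2]; exact Nat.succ_le_succ hL,
      f ∘ pairMax (pairLeft d) (pairRight d), hf.precomp (isReLULayer_pairMax _ _), fun x => ?_⟩
    rw [Function.comp_apply, hfx, sup'_pairMax (exists_pairLeft_or_pairRight d)]
end
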